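/- arXiv:1805.09225 — 4 statements merged into one kernel-verified Lean document; each statement's English description precedes it below -/
import Mathlib

section
/- Let f(t), g(t) ∈ ℤ[t] be distinct non-constant polynomials with positive leading coefficients such that f(1) = g(1) ≠ 0, and let d be the largest integer such that t^d divides f(t) − g(t). Then for every sufficiently large prime p, the congruence G_{f(p)} ≡ G_{g(p)} (mod p^{d+1}) holds coefficientwise in ℚ[[q]]. -/
open scoped BigOperators

noncomputable def sigmaQ (k : ℕ) (n : ℕ) : ℚ := ∑ d ∈ n.divisors, (d : ℚ) ^ k

/-- Serre's normalized Eisenstein series G_k (with the convention G_k = 0 for bad k). -/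
noncomputable def G (k : ℤ) : PowerSeries ℚ :=
  if 4 ≤ k ∧ Even k then
    PowerSeries.mk fun n =>
      if n = 0 then -(bernoulli k.toNat) / (2 * (k : ℚ)) else sigmaQ (k.toNat - 1) n
  else 0

/-- `F ≡ H (mod p^N)` coefficientwise: all coefficients are p-integral and every
coefficient of the difference has p-adic valuation at least N. -/
def SCongr (p N : ℕ) (F H : PowerSeries ℚ) : Prop :=
  (∀ n, padicNorm p (PowerSeries.coeff n F) ≤ 1) ∧
  (∀ n, padicNorm p (PowerSeries.coeff n H) ≤ 1) ∧
  ∀ n, padicNorm p (PowerSeries.coeff n (F - H)) ≤ (p : ℚ) ^ (-(N : ℤ))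


/-!
For large p the weights k = f(p) and k' = g(p) are large, both congruent to f(1) = g(1) modulo
p - 1 (so they have the same parity and p - 1 ∤ k), and congruent modulo
φ(p^(d+1)) = p^d (p - 1), because t^d (t - 1) divides f - g. For odd weights both series vanish.
For even weights the coefficients σ_{k-1}(n) and σ_{k'-1}(n) agree modulo p^(d+1) by Euler's
theorem, and the constant terms by Kummer's congruence for B_k / k.

Kummer's congruence comes from Voronoi's congruence: for c prime to p and n = p^M,
(c^k - 1) B_k / k ≡ ∑_{a<n} ⌊ca/n⌋ (ca mod n)^(k-1) modulo a high power of p. This follows from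
Faulhaber's formula, whose correction terms are small because p B_j is p-integral
(von Staudt–Clausen). For a primitive root c, the factor c^k - 1 is a p-adic unit when p - 1 ∤ k.
-/

open Finset
open scoped Nat

lemma sum_range_comp_mul_mod {M : Type*} [AddCommMonoid M] {c n : ℕ} (hc : c.Coprime n)
    (f : ℕ → M) : ∑ a ∈ range n, f (c * a % n) = ∑ a ∈ range n, f a := by
  have hmaps : ∀ a ∈ range n, c * a % n ∈ range n := fun a ha =>
    mem_range.mpr (Nat.mod_lt _ (Nat.zero_lt_of_lt (mem_range.mp ha)))
  have hinj : Set.InjOn (fun a => c * a % n) (range n : Set ℕ) := fun a ha b hb hab =>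
    Nat.ModEq.eq_of_lt_of_lt (Nat.ModEq.cancel_left_of_coprime (Nat.coprime_comm.mp hc) hab)
      (mem_range.mp ha) (mem_range.mp hb)
  exact sum_nbij _ hmaps hinj (surjOn_of_injOn_of_card_le _ hmaps hinj le_rfl) fun _ _ => rfl

def voronoiSum (c n t : ℕ) : ℤ :=
  ∑ a ∈ range n, ((c * a / n : ℕ) : ℤ) * ((c * a % n : ℕ) : ℤ) ^ t

lemma sq_dvd_voronoi {c n : ℕ} (hc : c.Coprime n) (k : ℕ) :
    (n : ℤ) ^ 2 ∣
      ((c : ℤ) ^ k - 1) * ∑ a ∈ range n, (a : ℤ) ^ k - k * n * voronoiSum c n (k - 1) := by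
  set q : ℕ → ℤ := fun a => ((c * a / n : ℕ) : ℤ)
  set r : ℕ → ℤ := fun a => ((c * a % n : ℕ) : ℤ)
  have hperm : ∑ a ∈ range n, r a ^ k = ∑ a ∈ range n, (a : ℤ) ^ k :=
    sum_range_comp_mul_mod hc fun b => (b : ℤ) ^ k
  have hsplit : ∀ a, (c : ℤ) * a = r a + n * q a := fun a => by
    simp only [r, q]
    exact_mod_cast (Nat.mod_add_div (c * a) n).symm
  have hexpand : ((c : ℤ) ^ k - 1) * ∑ a ∈ range n, (a : ℤ) ^ k - k * n * voronoiSum c n (k - 1)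
      = ∑ a ∈ range n, ((r a + n * q a) ^ k - r a ^ (k - 1) * (n * q a) * k - r a ^ k) := by
    simp only [sum_sub_distrib, ← hsplit, mul_pow, hperm, voronoiSum, mul_sum, sub_one_mul]
    rw [sub_right_comm]
    congr 2
    exact sum_congr rfl fun a _ => by ring
  rw [hexpand]
  exact dvd_sum fun a _ => (mul_pow (n : ℤ) (q a) 2 ▸ dvd_mul_right _ _).trans
    (sq_dvd_add_pow_sub_sub _ _ k)

lemma padicNorm_natCast {p : ℕ} (j : ℕ) (hj : j ≠ 0) :
    padicNorm p j = (p : ℚ) ^ (-(padicValNat p j : ℤ)) := by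
  rw [padicNorm.eq_zpow_of_nonzero (by exact_mod_cast hj), padicValRat.of_nat]

section Padic

variable {p : ℕ} [hp : Fact p.Prime]

lemma padicNorm_mul_le {x y a b : ℚ} (hx : padicNorm p x ≤ a) (hy : padicNorm p y ≤ b) :
    padicNorm p (x * y) ≤ a * b := by
  rw [padicNorm.mul]
  exact mul_le_mul hx hy (padicNorm.nonneg y) ((padicNorm.nonneg x).trans hx)

lemma padicNorm_add_le {x y C : ℚ} (hx : padicNorm p x ≤ C) (hy : padicNorm p y ≤ C) :
    padicNorm p (x + y) ≤ C :=
  padicNorm.nonarchimedean.trans (max_le hx hy)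

lemma padicNorm_sub_le {x y C : ℚ} (hx : padicNorm p x ≤ C) (hy : padicNorm p y ≤ C) :
    padicNorm p (x - y) ≤ C :=
  padicNorm.sub.trans (max_le hx hy)

lemma padicNorm_intCast_le_of_dvd {z : ℤ} {N : ℕ} (h : (p : ℤ) ^ N ∣ z) :
    padicNorm p z ≤ (p : ℚ) ^ (-(N : ℤ)) :=
  padicNorm.dvd_iff_norm_le.mp (by exact_mod_cast h)

lemma padicNorm_prime_pow (t : ℕ) : padicNorm p ((p : ℚ) ^ t) = (p : ℚ) ^ (-(t : ℤ)) := by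
  rw [← Nat.cast_pow, padicNorm_natCast _ (pow_ne_zero t hp.out.ne_zero),
    padicValNat.prime_pow]

lemma prime_zpow_le_zpow {a b : ℤ} (h : a ≤ b) : (p : ℚ) ^ a ≤ (p : ℚ) ^ b :=
  zpow_le_zpow_right₀ (by exact_mod_cast hp.out.one_le) h

lemma padicNorm_div_natCast (x : ℚ) {j : ℕ} (hj : j ≠ 0) :
    padicNorm p (x / j) = padicNorm p x * (p : ℚ) ^ (padicValNat p j : ℤ) := by
  rw [padicNorm.div, padicNorm_natCast j hj, zpow_neg, div_inv_eq_mul]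

lemma padicNorm_prime_pow_div_le (M : ℕ) {j : ℕ} (hj : j ≠ 0) :
    padicNorm p ((p : ℚ) ^ (M * j) / j) ≤ (p : ℚ) ^ (-((M : ℤ) * j) + j - 1) := by
  have hv : padicValNat p j < j :=
    (Nat.lt_pow_self hp.out.one_lt).trans_le
      (Nat.le_of_dvd (Nat.pos_of_ne_zero hj) pow_padicValNat_dvd)
  rw [padicNorm_div_natCast _ hj, padicNorm_prime_pow,
    ← zpow_add₀ (by exact_mod_cast hp.out.ne_zero)]
  apply prime_zpow_le_zpow
  rw [Nat.cast_mul]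
  omega

lemma padicNorm_div_two {x : ℚ} (hp2 : p ≠ 2) : padicNorm p (x / 2) = padicNorm p x := by
  have h2 : padicNorm p (2 : ℕ) = 1 := (padicNorm.nat_eq_one_iff 2).mpr fun h =>
    hp2 ((Nat.prime_dvd_prime_iff_eq hp.out Nat.prime_two).mp h)
  rw [padicNorm.div, show (2 : ℚ) = (2 : ℕ) by norm_num, h2, div_one]

lemma padicNorm_one_div_prime_le {q : ℕ} (hq : q.Prime) : padicNorm p (1 / q) ≤ p := by
  rw [padicNorm.div, padicNorm.one]
  obtain rfl | hqp := eq_or_ne q p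
  · rw [padicNorm.padicNorm_p_of_prime, one_div, inv_inv]
  · have : ¬ p ∣ q := fun h => hqp ((Nat.prime_dvd_prime_iff_eq hp.out hq).mp h).symm
    rw [(padicNorm.nat_eq_one_iff q).mpr this, div_one]
    exact_mod_cast hp.out.one_le

lemma padicNorm_bernoulli_le (n : ℕ) : padicNorm p (bernoulli n) ≤ p := by
  rcases Nat.even_or_odd n with ⟨k, rfl⟩ | hodd
  · obtain ⟨z, hz⟩ := Bernoulli.vonStaudt_clausen k
    rw [← two_mul, eq_sub_of_add_eq hz.symm]
    exact padicNorm_sub_le ((padicNorm.of_int z).trans (by exact_mod_cast hp.out.one_le))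
      (padicNorm.sum_le' (fun q hq => padicNorm_one_div_prime_le (mem_filter.mp hq).2.1)
        (by positivity))
  · obtain rfl | hn := eq_or_ne n 1
    · rw [bernoulli_one, neg_div, padicNorm.neg]
      exact_mod_cast padicNorm_one_div_prime_le Nat.prime_two
    · rw [bernoulli_eq_zero_of_odd hodd (by obtain ⟨k, rfl⟩ := hodd; omega), padicNorm.zero]
      positivity

lemma padicNorm_sum_range_pow_sub_le (k : ℕ) {M : ℕ} (hM : 1 ≤ M) :
    padicNorm p ((∑ a ∈ range (p ^ M), (a : ℚ) ^ k) - (p : ℚ) ^ M * bernoulli k)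
      ≤ (p : ℚ) ^ (2 - 2 * (M : ℤ)) := by
  have htail : (∑ a ∈ range (p ^ M), (a : ℚ) ^ k) - (p : ℚ) ^ M * bernoulli k =
      ∑ i ∈ range k,
        bernoulli i * (k.choose i) * ((p : ℚ) ^ (M * (k + 1 - i)) / ↑(k + 1 - i)) := by
    rw [sum_range_pow, sum_range_succ, Nat.choose_succ_self_right, Nat.add_sub_cancel_left,
      pow_one, Nat.cast_pow, add_sub_assoc]
    have hlast :
        bernoulli k * ↑(k + 1) * (p : ℚ) ^ M / (k + 1) - (p : ℚ) ^ M * bernoulli k = 0 := by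
      push_cast; field_simp; ring
    rw [hlast, add_zero]
    refine sum_congr rfl fun i hi => ?_
    have hj : ((k + 1 - i : ℕ) : ℚ) ≠ 0 :=
      Nat.cast_ne_zero.mpr (by have := mem_range.mp hi; omega)
    have hchoose : (k.choose i : ℚ) * (k + 1) = (k + 1).choose i * ↑(k + 1 - i) := by
      exact_mod_cast Nat.choose_mul_succ_eq k i
    rw [← pow_mul]
    field_simp
    linear_combination (-bernoulli i * (p : ℚ) ^ (M * (k + 1 - i))) * hchoose
  rw [htail]
  refine padicNorm.sum_le' (fun i hi => ?_) (by positivity)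
  have hj : 2 ≤ k + 1 - i := by have := mem_range.mp hi; omega
  calc padicNorm p (bernoulli i * (k.choose i) * ((p : ℚ) ^ (M * (k + 1 - i)) / ↑(k + 1 - i)))
      ≤ (p * 1) * (p : ℚ) ^ (-((M : ℤ) * ↑(k + 1 - i)) + ↑(k + 1 - i) - 1) :=
        padicNorm_mul_le (padicNorm_mul_le (padicNorm_bernoulli_le i) (padicNorm.of_nat _))
          (padicNorm_prime_pow_div_le M (by omega))
    _ = (p : ℚ) ^ (-((M : ℤ) - 1) * ↑(k + 1 - i)) := by
        rw [mul_one, ← zpow_one_add₀ (by exact_mod_cast hp.out.ne_zero)]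
        ring_nf
    _ ≤ (p : ℚ) ^ (2 - 2 * (M : ℤ)) := by
        apply prime_zpow_le_zpow
        have : (2 : ℤ) ≤ ↑(k + 1 - i) := by exact_mod_cast hj
        nlinarith

lemma padicNorm_voronoi_sub_le {c : ℕ} (hc : ¬ p ∣ c) {k : ℕ} (hk : k ≠ 0) (N : ℕ) {M : ℕ}
    (hM : padicValNat p k + N + 2 ≤ M) :
    padicNorm p (((c : ℚ) ^ k - 1) * bernoulli k / k - (voronoiSum c (p ^ M) (k - 1) : ℚ))
      ≤ (p : ℚ) ^ (-(N : ℤ)) := by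
  have hp0 : (p : ℚ) ≠ 0 := by exact_mod_cast hp.out.ne_zero
  have hcop : c.Coprime (p ^ M) :=
    Nat.Coprime.pow_right M ((Nat.Prime.coprime_iff_not_dvd hp.out).mpr hc).symm
  obtain ⟨Z, hZ⟩ := sq_dvd_voronoi hcop k
  set n : ℚ := (p : ℚ) ^ M
  set u : ℚ := (c : ℚ) ^ k - 1
  set R : ℚ := (voronoiSum c (p ^ M) (k - 1) : ℚ)
  set E : ℚ := (∑ a ∈ range (p ^ M), (a : ℚ) ^ k) - n * bernoulli k
  have hkQ : (k : ℚ) ≠ 0 := Nat.cast_ne_zero.mpr hk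
  have hn : n ≠ 0 := pow_ne_zero M hp0
  have hZQ : u * (n * bernoulli k + E) - k * n * R = n ^ 2 * Z := by
    have := congrArg (Int.cast : ℤ → ℚ) hZ
    push_cast at this
    simp only [u, n, R, E, add_sub_cancel]
    exact this
  have hsplit : u * bernoulli k / k - R = n * Z / k - u * E / k / n := by
    field_simp
    linear_combination hZQ
  have hu : padicNorm p u ≤ 1 := by
    simpa [u] using padicNorm.of_int ((c : ℤ) ^ k - 1)
  have hnorm_n : padicNorm p n = (p : ℚ) ^ (-(M : ℤ)) := padicNorm_prime_pow M
  rw [hsplit]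
  refine padicNorm_sub_le ?_ ?_
  · calc padicNorm p (n * Z / k)
        ≤ (p : ℚ) ^ (-(M : ℤ)) * 1 * (p : ℚ) ^ (padicValNat p k : ℤ) := by
          rw [padicNorm_div_natCast _ hk]
          gcongr
          exact padicNorm_mul_le hnorm_n.le (padicNorm.of_int Z)
      _ ≤ (p : ℚ) ^ (-(N : ℤ)) := by
          rw [mul_one, ← zpow_add₀ hp0]
          exact prime_zpow_le_zpow (by omega)
  · calc padicNorm p (u * E / k / n)
        ≤ 1 * (p : ℚ) ^ (2 - 2 * (M : ℤ)) * (p : ℚ) ^ (padicValNat p k : ℤ)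
            / (p : ℚ) ^ (-(M : ℤ)) := by
          rw [padicNorm.div, padicNorm_div_natCast _ hk, hnorm_n]
          gcongr
          exact padicNorm_mul_le hu (padicNorm_sum_range_pow_sub_le k (by omega))
      _ ≤ (p : ℚ) ^ (-(N : ℤ)) := by
          rw [one_mul, div_eq_mul_inv, ← zpow_neg, ← zpow_add₀ hp0, ← zpow_add₀ hp0]
          exact prime_zpow_le_zpow (by omega)

lemma sub_one_dvd_totient_prime_pow {N : ℕ} (hN : N ≠ 0) : p - 1 ∣ φ (p ^ N) := by
  rw [Nat.totient_prime_pow hp.out (Nat.pos_of_ne_zero hN)]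
  exact dvd_mul_left _ _

lemma prime_pow_dvd_pow_sub_pow (r : ℕ) {N t t' : ℕ} (hN : N ≤ t') (ht : t' ≤ t)
    (hφ : φ (p ^ N) ∣ t - t') : (p : ℤ) ^ N ∣ (r : ℤ) ^ t - (r : ℤ) ^ t' := by
  obtain ⟨m, hm⟩ := hφ
  obtain rfl : t = t' + φ (p ^ N) * m := by omega
  rw [pow_add, ← mul_sub_one]
  by_cases hpr : p ∣ r
  · exact dvd_mul_of_dvd_left
      ((pow_dvd_pow_of_dvd (Int.natCast_dvd_natCast.mpr hpr) N).trans (pow_dvd_pow _ hN)) _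
  · have hcop : r.Coprime (p ^ N) :=
      Nat.Coprime.pow_right N ((Nat.Prime.coprime_iff_not_dvd hp.out).mpr hpr).symm
    have := Nat.modEq_iff_dvd.mp ((Nat.ModEq.pow_totient hcop).pow m).symm
    rw [one_pow, ← pow_mul] at this
    exact dvd_mul_of_dvd_right (by exact_mod_cast this) _

lemma prime_pow_dvd_voronoiSum_sub (c n : ℕ) {N t t' : ℕ} (hN : N ≤ t') (ht : t' ≤ t)
    (hφ : φ (p ^ N) ∣ t - t') : (p : ℤ) ^ N ∣ voronoiSum c n t - voronoiSum c n t' := by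
  rw [voronoiSum, voronoiSum, ← sum_sub_distrib]
  exact dvd_sum fun a _ => by
    rw [← mul_sub]
    exact dvd_mul_of_dvd_right (prime_pow_dvd_pow_sub_pow _ hN ht hφ) _

lemma exists_not_dvd_pow_sub_one :
    ∃ c : ℕ, ¬ p ∣ c ∧ ∀ k, ¬ (p - 1) ∣ k → ¬ (p : ℤ) ∣ (c : ℤ) ^ k - 1 := by
  obtain ⟨g, hg⟩ := IsCyclic.exists_ofOrder_eq_natCard (α := (ZMod p)ˣ)
  rw [Nat.card_eq_fintype_card, ZMod.card_units] at hg
  have hc : (((g : ZMod p).val : ℕ) : ZMod p) = g := ZMod.natCast_zmod_val _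
  refine ⟨(g : ZMod p).val, fun h => g.ne_zero ?_, fun k hk h => hk ?_⟩
  · rw [← hc, ZMod.natCast_eq_zero_iff]
    exact h
  · rw [← ZMod.intCast_zmod_eq_zero_iff_dvd] at h
    push_cast at h
    rw [hc, sub_eq_zero] at h
    exact hg ▸ orderOf_dvd_of_pow_eq_one (Units.ext (by simpa using h))

lemma padicNorm_pow_sub_one_eq_one {c k : ℕ} (h : ¬ (p : ℤ) ∣ (c : ℤ) ^ k - 1) :
    padicNorm p ((c : ℚ) ^ k - 1) = 1 := by
  simpa using (padicNorm.int_eq_one_iff ((c : ℤ) ^ k - 1)).mpr h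

lemma padicNorm_bernoulli_div_le_one {k : ℕ} (hk : ¬ (p - 1) ∣ k) :
    padicNorm p (bernoulli k / k) ≤ 1 := by
  obtain ⟨c, hc, hck⟩ := exists_not_dvd_pow_sub_one (p := p)
  have hv := padicNorm_voronoi_sub_le hc (k := k) (by rintro rfl; exact hk (dvd_zero _)) 0
    (M := padicValNat p k + 2) (by omega)
  have h := padicNorm_add_le (by simpa using hv)
    (padicNorm.of_int (voronoiSum c (p ^ (padicValNat p k + 2)) (k - 1)))
  rwa [sub_add_cancel, mul_div_assoc, padicNorm.mul, padicNorm_pow_sub_one_eq_one (hck k hk),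
    one_mul] at h

theorem kummer_congruence {N k k' : ℕ} (hk : ¬ (p - 1) ∣ k) (hN0 : N ≠ 0) (hN : N < k')
    (hle : k' ≤ k) (hφ : φ (p ^ N) ∣ k - k') :
    padicNorm p (bernoulli k / k - bernoulli k' / k') ≤ (p : ℚ) ^ (-(N : ℤ)) := by
  have hk' : ¬ (p - 1) ∣ k' := fun h => hk <| by
    simpa [Nat.sub_add_cancel hle] using
      Nat.dvd_add ((sub_one_dvd_totient_prime_pow hN0).trans hφ) h
  obtain ⟨c, hc, hck⟩ := exists_not_dvd_pow_sub_one (p := p)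
  set M := padicValNat p k + padicValNat p k' + N + 2
  have hv := padicNorm_voronoi_sub_le hc (by omega : k ≠ 0) N (M := M) (by omega)
  have hv' := padicNorm_voronoi_sub_le hc (by omega : k' ≠ 0) N (M := M) (by omega)
  set u : ℚ := (c : ℚ) ^ k - 1
  set u' : ℚ := (c : ℚ) ^ k' - 1
  set R : ℚ := (voronoiSum c (p ^ M) (k - 1) : ℚ)
  set R' : ℚ := (voronoiSum c (p ^ M) (k' - 1) : ℚ)
  have huu' : padicNorm p (u - u') ≤ (p : ℚ) ^ (-(N : ℤ)) := by
    simpa [u, u'] using padicNorm_intCast_le_of_dvd (prime_pow_dvd_pow_sub_pow c hN.le hle hφ)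
  have hRR' : padicNorm p (R - R') ≤ (p : ℚ) ^ (-(N : ℤ)) := by
    have := padicNorm_intCast_le_of_dvd
      (prime_pow_dvd_voronoiSum_sub c (p ^ M) (t := k - 1) (by omega : N ≤ k' - 1) (by omega)
        (by rwa [show k - 1 - (k' - 1) = k - k' by omega]))
    simpa [R, R'] using this
  have hkey : u * (bernoulli k / k - bernoulli k' / k') =
      ((u * bernoulli k / k - R) - (u' * bernoulli k' / k' - R'))
        - (u - u') * (bernoulli k' / k') + (R - R') := by ring
  have h := padicNorm_add_le (padicNorm_sub_le (padicNorm_sub_le hv hv')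
    (mul_one ((p : ℚ) ^ (-(N : ℤ))) ▸
      padicNorm_mul_le huu' (padicNorm_bernoulli_div_le_one hk'))) hRR'
  rwa [← hkey, padicNorm.mul, padicNorm_pow_sub_one_eq_one (hck k hk), one_mul] at h

end Padic

lemma SCongr.symm {p N : ℕ} {F H : PowerSeries ℚ} (h : SCongr p N F H) : SCongr p N H F := by
  obtain ⟨hF, hH, hFH⟩ := h
  refine ⟨hH, hF, fun n => ?_⟩
  rw [← neg_sub, map_neg, padicNorm.neg]
  exact hFH n

lemma SCongr.zero (p N : ℕ) : SCongr p N 0 0 :=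
  ⟨fun _ => by simp, fun _ => by simp,
    fun _ => by simp only [sub_zero, map_zero, padicNorm.zero]; positivity⟩

lemma G_eq_zero_of_not_even {k : ℤ} (hk : ¬ Even k) : G k = 0 := by
  rw [G, if_neg (fun h => hk h.2)]

lemma coeff_G_natCast {k : ℕ} (hk : 4 ≤ k) (he : Even k) (n : ℕ) :
    PowerSeries.coeff n (G k) = if n = 0 then -bernoulli k / (2 * k) else sigmaQ (k - 1) n := by
  rw [G, if_pos ⟨by exact_mod_cast hk, by exact_mod_cast he⟩, PowerSeries.coeff_mk]
  simp

section Eisenstein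

variable {p : ℕ} [hp : Fact p.Prime]

lemma padicNorm_sigmaQ_sub_le (n : ℕ) {N t t' : ℕ} (hN : N ≤ t') (ht : t' ≤ t)
    (hφ : φ (p ^ N) ∣ t - t') :
    padicNorm p (sigmaQ t n - sigmaQ t' n) ≤ (p : ℚ) ^ (-(N : ℤ)) := by
  have h := padicNorm_intCast_le_of_dvd (dvd_sum fun e (_ : e ∈ n.divisors) =>
    prime_pow_dvd_pow_sub_pow (p := p) e hN ht hφ)
  simpa [sigmaQ] using h

lemma padicNorm_coeff_G_le_one {k : ℕ} (hk : 4 ≤ k) (he : Even k) (hp2 : p ≠ 2)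
    (hB : padicNorm p (bernoulli k / k) ≤ 1) (n : ℕ) :
    padicNorm p (PowerSeries.coeff n (G k)) ≤ 1 := by
  rw [coeff_G_natCast hk he]
  split_ifs
  · rwa [neg_div, padicNorm.neg, mul_comm, ← div_div, padicNorm_div_two hp2]
  · simpa [sigmaQ] using padicNorm.of_nat (∑ e ∈ n.divisors, e ^ (k - 1))

theorem sCongr_G_natCast {N k k' : ℕ} (hk : ¬ (p - 1) ∣ k) (hN0 : N ≠ 0) (hN : N < k')
    (h4 : 4 ≤ k') (hle : k' ≤ k) (he : Even k) (he' : Even k') (hφ : φ (p ^ N) ∣ k - k') :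
    SCongr p N (G k) (G k') := by
  have hp2 : p ≠ 2 := by rintro rfl; exact hk (one_dvd k)
  have hkum := kummer_congruence hk hN0 hN hle hφ
  have hB := padicNorm_bernoulli_div_le_one hk
  have hB' : padicNorm p (bernoulli k' / k') ≤ 1 := by
    have hpN : (p : ℚ) ^ (-(N : ℤ)) ≤ 1 :=
      zpow_le_one_of_nonpos₀ (by exact_mod_cast hp.out.one_le) (by omega)
    simpa using padicNorm_sub_le hB (hkum.trans hpN)
  refine ⟨padicNorm_coeff_G_le_one (by omega) he hp2 hB,
    padicNorm_coeff_G_le_one h4 he' hp2 hB', fun n => ?_⟩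
  rw [map_sub, coeff_G_natCast (by omega) he, coeff_G_natCast h4 he']
  split_ifs
  · rw [neg_div, neg_div, neg_sub_neg, mul_comm, mul_comm 2, ← div_div, ← div_div, ← sub_div,
      padicNorm_div_two hp2, ← padicNorm.neg, neg_sub]
    exact hkum
  · exact padicNorm_sigmaQ_sub_le n (by omega) (by omega)
      (by rwa [show k - 1 - (k' - 1) = k - k' by omega])

theorem sCongr_G_of_modEq {N : ℕ} {k k' : ℤ} (hk : ¬ ((p : ℤ) - 1) ∣ k) (hN0 : N ≠ 0)
    (hNk : N < k) (hNk' : N < k') (h4k : 4 ≤ k) (h4k' : 4 ≤ k')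
    (hkk' : k ≡ k' [ZMOD φ (p ^ N)]) : SCongr p N (G k) (G k') := by
  have hcast : ((p - 1 : ℕ) : ℤ) = (p : ℤ) - 1 := by
    rw [Nat.cast_sub hp.out.one_le, Nat.cast_one]
  have hp1 : ((p : ℤ) - 1) ∣ k' - k :=
    hcast ▸ (Int.natCast_dvd_natCast.mpr (sub_one_dvd_totient_prime_pow hN0)).trans
      (Int.modEq_iff_dvd.mp hkk')
  have hk' : ¬ ((p : ℤ) - 1) ∣ k' := fun h => hk (by simpa using dvd_sub h hp1)
  have hp2 : p ≠ 2 := by rintro rfl; exact hk (by norm_num)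
  have hpar : Even k ↔ Even k' := by
    have hodd : Odd (p : ℤ) := by exact_mod_cast hp.out.odd_of_ne_two hp2
    exact (Int.even_sub.mp (even_iff_two_dvd.mpr
      ((even_iff_two_dvd.mp (hodd.sub_odd odd_one)).trans hp1))).symm
  by_cases he : Even k
  · lift k to ℕ using by omega
    lift k' to ℕ using by omega
    have he' := hpar.mp he
    clear hp1 hpar
    wlog hle : k' ≤ k generalizing k k'
    · exact (this k' hk' hNk' h4k' he' k hNk h4k hk hkk'.symm he (by omega)).symm
    exact sCongr_G_natCast (fun h => hk (hcast ▸ Int.natCast_dvd_natCast.mpr h)) hN0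
      (by exact_mod_cast hNk') (by exact_mod_cast h4k') hle (by exact_mod_cast he)
      (by exact_mod_cast he') ((Nat.modEq_iff_dvd' hle).mp (Int.natCast_modEq_iff.mp hkk').symm)
  · rw [G_eq_zero_of_not_even he, G_eq_zero_of_not_even (hpar.not.mp he)]
    exact SCongr.zero p N

end Eisenstein

namespace Polynomial

open Filter

lemma eventually_le_eval_natCast {f : ℤ[X]} (hdeg : 0 < f.natDegree)
    (hlc : 0 < f.leadingCoeff) (C : ℤ) : ∀ᶠ n : ℕ in atTop, C ≤ f.eval (n : ℤ) := by
  have hinj : Function.Injective (Int.castRingHom ℝ) := Int.cast_injective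
  have htend := (f.map (Int.castRingHom ℝ)).tendsto_atTop_of_leadingCoeff_nonneg
    (by rwa [degree_map_eq_of_injective hinj, ← natDegree_pos_iff_degree_pos])
    (by rw [leadingCoeff_map_of_injective hinj, eq_intCast]; exact_mod_cast hlc.le)
  filter_upwards [(htend.comp tendsto_natCast_atTop_atTop).eventually_ge_atTop (C : ℝ)] with n hn
  have := eval_intCast_map (Int.castRingHom ℝ) f n
  simp only [Function.comp_apply, Int.cast_natCast, eq_intCast] at hn this
  exact_mod_cast this ▸ hn

lemma pow_mul_sub_one_dvd_eval {F : ℤ[X]} {d : ℕ} (hd : X ^ d ∣ F) (h1 : F.eval 1 = 0)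
    (x : ℤ) : x ^ d * (x - 1) ∣ F.eval x := by
  obtain ⟨H, rfl⟩ := hd
  obtain ⟨W, rfl⟩ : X - C 1 ∣ H := dvd_iff_isRoot.mpr (by simpa using h1)
  exact ⟨W.eval x, by simp [mul_assoc]⟩

end Polynomial

theorem statement2_general (f g : Polynomial ℤ)
    (hfdeg : 0 < f.natDegree) (hgdeg : 0 < g.natDegree)
    (hflc : 0 < f.leadingCoeff) (hglc : 0 < g.leadingCoeff)
    (h1 : f.eval 1 = g.eval 1) (h1ne : f.eval 1 ≠ 0)
    (d : ℕ) (hd : Polynomial.X ^ d ∣ (f - g)) :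
    ∃ P : ℕ, ∀ p : ℕ, p.Prime → P < p →
      SCongr p (d + 1) (G (f.eval (p : ℤ))) (G (g.eval (p : ℤ))) := by
  obtain ⟨P, hP⟩ := Filter.eventually_atTop.mp <|
    (Polynomial.eventually_le_eval_natCast hfdeg hflc (d + 4)).and <|
    (Polynomial.eventually_le_eval_natCast hgdeg hglc (d + 4)).and <|
    (tendsto_natCast_atTop_atTop (R := ℤ)).eventually_gt_atTop (|f.eval 1| + 1)
  refine ⟨P, fun p hp hPp => ?_⟩
  have := Fact.mk hp
  obtain ⟨hf, hg, hp1⟩ := hP p hPp.le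
  refine sCongr_G_of_modEq (fun h => ?_) d.succ_ne_zero (by omega) (by omega) (by omega)
    (by omega) (Int.modEq_iff_dvd.mpr ?_).symm
  · have h1dvd : (p : ℤ) - 1 ∣ f.eval 1 := by
      simpa using dvd_sub h (Polynomial.sub_dvd_eval_sub (p : ℤ) 1 f)
    have := Int.le_of_dvd (abs_pos.mpr h1ne) ((dvd_abs _ _).mpr h1dvd)
    omega
  · rw [Nat.totient_prime_pow_succ hp, Nat.cast_mul, Nat.cast_pow, Nat.cast_sub hp.one_le,
      Nat.cast_one, ← Polynomial.eval_sub]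
    exact Polynomial.pow_mul_sub_one_dvd_eval hd (by simp [h1]) (p : ℤ)

theorem statement2 (f g : Polynomial ℤ) (hfg : f ≠ g)
    (hfdeg : 0 < f.natDegree) (hgdeg : 0 < g.natDegree)
    (hflc : 0 < f.leadingCoeff) (hglc : 0 < g.leadingCoeff)
    (h1 : f.eval 1 = g.eval 1) (h1ne : f.eval 1 ≠ 0)
    (d : ℕ) (hd : Polynomial.X ^ d ∣ (f - g)) (hd' : ¬ Polynomial.X ^ (d + 1) ∣ (f - g)) :
    ∃ P : ℕ, ∀ p : ℕ, p.Prime → P < p →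
      SCongr p (d + 1) (G (f.eval (p : ℤ))) (G (g.eval (p : ℤ))) :=
  statement2_general f g hfdeg hgdeg hflc hglc h1 h1ne d hd
end

section
/- Let N be a positive integer, let f_1,…,f_n ∈ ℤ[t] be non-constant polynomials with positive leading coefficients, and let g_1,…,g_n ∈ ℚ(t). Assume conditions C2, C3 and C4 hold. Then there exists a positive integer P such that for every prime p > P and every positive integer m one has v_p( ∑_{i=1}^n g_i(p)·a_m(G*_{f_i(p)}) ) ≥ N, where a_m(G*_k) = σ*_{k−1}(m) = ∑_{d∣m, p∤d} d^{k−1} for even integers k ≥ 4, and a_m(G*_k) = 0 if k is not an even integer ≥ 4. -/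
open scoped BigOperators

noncomputable def tval (h : RatFunc ℚ) : WithTop ℤ :=
  open scoped Classical in
  if h = 0 then ⊤
  else (((h.num.rootMultiplicity 0 : ℤ) - (h.denom.rootMultiplicity 0 : ℤ) : ℤ) : WithTop ℤ)

noncomputable def FQ (f : Polynomial ℤ) : RatFunc ℚ :=
  algebraMap (Polynomial ℚ) (RatFunc ℚ) (f.map (Int.castRingHom ℚ))

noncomputable def gval (p : ℕ) (g : RatFunc ℚ) : ℚ := RatFunc.eval (RingHom.id ℚ) (p : ℚ) g

/-- `M`, the minimum of the t-adic valuations of the `g i`. -/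
noncomputable def Mval {n : ℕ} (g : Fin n → RatFunc ℚ) : WithTop ℤ :=
  Finset.univ.inf fun i => tval (g i)

/-- Condition C1. -/
noncomputable def C1cond {n : ℕ} (N : ℕ) (f : Fin n → Polynomial ℤ) (g0 : RatFunc ℚ)
    (g : Fin n → RatFunc ℚ) : Prop :=
  ((N : ℤ) : WithTop ℤ) ≤ tval
    (g0
      + (1 / 2 : RatFunc ℚ) * (1 - RatFunc.X⁻¹) *
          ∑ i ∈ Finset.univ.filter (fun i => (f i).eval 1 = 0), g i * (FQ (f i))⁻¹
      + (1 / 2 : RatFunc ℚ) *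
          ∑ i ∈ Finset.univ.filter (fun i => Even ((f i).eval 1) ∧ 4 ≤ (f i).eval 1),
            RatFunc.C (bernoulli ((f i).eval 1).toNat / (((f i).eval 1 : ℤ) : ℚ)) *
              (1 - RatFunc.X ^ (((f i).eval 1).toNat - 1)) * g i)

/-- Condition C2. -/
noncomputable def C2cond {n : ℕ} (N : ℕ) (f : Fin n → Polynomial ℤ)
    (g : Fin n → RatFunc ℚ) : Prop :=
  ∀ l : ℤ, Even l → l ≤ 2 → (∃ i, (f i).eval 1 = l) →
    ∀ m : ℕ, ((m : ℤ) : WithTop ℤ) + Mval g ≤ ((N : ℤ) : WithTop ℤ) →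
      (((N : ℤ) - (m : ℤ) : ℤ) : WithTop ℤ) ≤
        tval (∑ i ∈ Finset.univ.filter (fun i => (f i).eval 1 = l), g i * FQ (f i) ^ m)

/-- Condition C3. -/
noncomputable def C3cond {n : ℕ} (N : ℕ) (f : Fin n → Polynomial ℤ)
    (g : Fin n → RatFunc ℚ) : Prop :=
  ∀ l : ℤ, Even l → 4 ≤ l → (∃ i, (f i).eval 1 = l) →
    ∀ m : ℕ, 1 ≤ m → ((m : ℤ) : WithTop ℤ) + Mval g ≤ ((N : ℤ) : WithTop ℤ) →
      (((N : ℤ) - (m : ℤ) : ℤ) : WithTop ℤ) ≤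
        tval (∑ i ∈ Finset.univ.filter (fun i => (f i).eval 1 = l),
          g i * (FQ (f i) ^ m - RatFunc.C ((l : ℚ) ^ m)))

/-- Condition C4. -/
noncomputable def C4cond {n : ℕ} (N : ℕ) (f : Fin n → Polynomial ℤ)
    (g : Fin n → RatFunc ℚ) : Prop :=
  ∀ l : ℤ, Even l → 4 ≤ l → (∃ i, (f i).eval 1 = l) →
    ((N : ℤ) : WithTop ℤ) ≤ tval (∑ i ∈ Finset.univ.filter (fun i => (f i).eval 1 = l), g i)


noncomputable def sigmaStarQ (p k n : ℕ) : ℚ :=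
  ∑ d ∈ n.divisors.filter (fun d => ¬ p ∣ d), (d : ℚ) ^ k

/-- The m-th coefficient (m ≥ 1) a_m(G*_k) = σ*_{k-1}(m) of the p-adic Eisenstein series,
with the convention that it is 0 unless k is an even integer ≥ 4. -/
noncomputable def amstar (p : ℕ) (k : ℤ) (m : ℕ) : ℚ :=
  open scoped Classical in
  if 4 ≤ k ∧ Even k then sigmaStarQ p (k.toNat - 1) m else 0


/-!
For a large prime `p` put `k_i = f_i(p)` and `l_i = f_i(1)`. Since `k_i ≡ l_i (mod p - 1)` and
`p - 1` is even, `a_m(G*_{k_i})` vanishes unless `l_i` is even. For `d ∣ m` prime to `p`, Fermat's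
little theorem writes `d^(k_i - 1) = d^(l_i - 1) (1 + z)^c_i` with `p ∣ z` and
`c_i = (k_i - l_i) / (p - 1)`, so by the binomial theorem the part of the sum over a fiber
`{i | l_i = l}` is `d^(l - 1) ∑_j z^j ∑_i g_i(p) (c_i choose j)`, and it suffices that
`∑_i g_i(p) (c_i choose j)` has valuation at least `N - j`. For `j > N - M` this holds termwise,
as every `g_i(p)` has valuation at least `M`. For `j ≤ N - M` we have `j < p`, so `c choose j` is
a polynomial of degree `j` in `k` with `p`-integral coefficients, and the claim reduces to the
moments `∑_i g_i(p) k_i^j`. These are values at `t = p` of rational functions which by C2, or by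
C3 and C4 together, have `t`-adic valuation at least `N - j`; and for all large `p`, a rational
function `h` with `v_t(h) ≥ r` satisfies `v_p(h(p)) ≥ r`.
-/

open Filter Finset Polynomial

lemma eventually_padicNorm_eq_one {q : ℚ} (hq : q ≠ 0) :
    ∀ᶠ p : ℕ in atTop, ∀ [Fact p.Prime], padicNorm p q = 1 := by
  filter_upwards [eventually_gt_atTop q.num.natAbs, eventually_gt_atTop q.den] with p hnum hden _
  have hnum' : ¬ (p : ℤ) ∣ q.num := fun h =>
    hnum.not_ge (Nat.le_of_dvd (by simpa using hq) (Int.natCast_dvd.mp h))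
  have hden' : ¬ p ∣ q.den := fun h => hden.not_ge (Nat.le_of_dvd q.den_pos h)
  rw [← Rat.num_div_den q, padicNorm.div, (padicNorm.int_eq_one_iff _).mpr hnum',
    (padicNorm.nat_eq_one_iff _).mpr hden', div_one]

lemma eventually_padicNorm_le_one (q : ℚ) :
    ∀ᶠ p : ℕ in atTop, ∀ [Fact p.Prime], padicNorm p q ≤ 1 := by
  rcases eq_or_ne q 0 with rfl | hq
  · exact .of_forall fun p _ => by simp
  · exact (eventually_padicNorm_eq_one hq).mono fun p h _ => h.le

lemma eventually_padicNorm_eval_le_one (A : ℚ[X]) :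
    ∀ᶠ p : ℕ in atTop, ∀ [Fact p.Prime], padicNorm p (A.eval (p : ℚ)) ≤ 1 := by
  have hcoeff := (eventually_all_finset (range (A.natDegree + 1))).mpr
    fun k _ => eventually_padicNorm_le_one (A.coeff k)
  filter_upwards [hcoeff] with p hcoeff _
  rw [eval_eq_sum_range]
  refine padicNorm.sum_le' (fun k hk => ?_) zero_le_one
  rw [padicNorm.mul]
  exact mul_le_one₀ (hcoeff k hk) (padicNorm.nonneg _) (by exact_mod_cast padicNorm.of_nat (p ^ k))

lemma eventually_padicNorm_eval_eq_one {B : ℚ[X]} (hB : B.eval 0 ≠ 0) :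
    ∀ᶠ p : ℕ in atTop, ∀ [Fact p.Prime], padicNorm p (B.eval (p : ℚ)) = 1 := by
  filter_upwards [eventually_padicNorm_eval_le_one B.divX, eventually_padicNorm_eq_one hB]
    with p hdivX h0 _
  have hsplit : B.eval (p : ℚ) = B.eval 0 + p * B.divX.eval (p : ℚ) := by
    conv_lhs => rw [← X_mul_divX_add B]
    simp [coeff_zero_eq_eval_zero, add_comm]
  have hsmall : padicNorm p (p * B.divX.eval (p : ℚ)) < 1 := by
    rw [padicNorm.mul]
    exact mul_lt_one_of_nonneg_of_lt_one_left (padicNorm.nonneg _)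
      padicNorm.padicNorm_p_lt_one_of_prime hdivX
  rw [hsplit, padicNorm.add_eq_max_of_ne (h0 ▸ hsmall.ne'), h0, max_eq_left hsmall.le]

lemma eventually_eval_natCast_ne_zero {B : ℚ[X]} (hB : B ≠ 0) :
    ∀ᶠ p : ℕ in atTop, B.eval (p : ℚ) ≠ 0 :=
  tendsto_natCast_atTop_atTop.eventually (B.eventually_atTop_not_isRoot hB)

lemma tendsto_eval_natCast_atTop {f : ℤ[X]} (hdeg : 0 < f.natDegree) (hlc : 0 < f.leadingCoeff) :
    Tendsto (fun p : ℕ => f.eval (p : ℤ)) atTop atTop := by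
  have hinj : Function.Injective (Int.castRingHom ℚ) := Int.cast_injective
  have hQ : Tendsto (fun x : ℚ => (f.map (Int.castRingHom ℚ)).eval x) atTop atTop :=
    tendsto_atTop_of_leadingCoeff_nonneg _
      (by rwa [degree_map_eq_of_injective hinj, ← natDegree_pos_iff_degree_pos])
      (by rw [leadingCoeff_map_of_injective hinj, eq_intCast]; exact_mod_cast hlc.le)
  have := hQ.comp tendsto_natCast_atTop_atTop
  simp only [Function.comp_def, eval_natCast_map, eq_intCast] at this
  exact tendsto_intCast_atTop_iff.mp this

lemma eventually_padicNorm_gval_le (h : RatFunc ℚ) :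
    ∀ᶠ p : ℕ in atTop, ∀ [Fact p.Prime], ∀ r : ℤ, (r : WithTop ℤ) ≤ tval h →
      padicNorm p (gval p h) ≤ (p : ℚ) ^ (-r) := by
  rcases eq_or_ne h 0 with rfl | hh
  · refine .of_forall fun p _ r _ => ?_
    simp only [gval, RatFunc.eval_zero, padicNorm.zero]
    positivity
  have hB0 : (h.denom /ₘ X ^ h.denom.rootMultiplicity 0).eval 0 ≠ 0 := by
    simpa using eval_divByMonic_pow_rootMultiplicity_ne_zero 0 (RatFunc.denom_ne_zero h)
  filter_upwards [eventually_padicNorm_eval_le_one (h.num /ₘ X ^ h.num.rootMultiplicity 0),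
    eventually_padicNorm_eval_eq_one hB0] with p hA hB _ r hr
  rw [tval, if_neg hh, WithTop.coe_le_coe] at hr
  have hp : (1 : ℚ) < p := by exact_mod_cast (Fact.out : p.Prime).one_lt
  have hnum : h.num.eval (p : ℚ) =
      p ^ h.num.rootMultiplicity 0 * (h.num /ₘ X ^ h.num.rootMultiplicity 0).eval (p : ℚ) := by
    conv_lhs => rw [← pow_mul_divByMonic_rootMultiplicity_eq h.num 0]
    simp
  have hden : h.denom.eval (p : ℚ) = p ^ h.denom.rootMultiplicity 0 *
      (h.denom /ₘ X ^ h.denom.rootMultiplicity 0).eval (p : ℚ) := by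
    conv_lhs => rw [← pow_mul_divByMonic_rootMultiplicity_eq h.denom 0]
    simp
  calc padicNorm p (gval p h)
      = padicNorm p (h.num.eval (p : ℚ)) / padicNorm p (h.denom.eval (p : ℚ)) :=
        padicNorm.div _ _
    _ ≤ (p : ℚ)⁻¹ ^ h.num.rootMultiplicity 0 / (p : ℚ)⁻¹ ^ h.denom.rootMultiplicity 0 := by
      rw [hnum, hden, padicNorm.mul, padicNorm.mul, hB, IsAbsoluteValue.abv_pow (padicNorm p),
        IsAbsoluteValue.abv_pow (padicNorm p), padicNorm.padicNorm_p_of_prime, mul_one]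
      exact div_le_div_of_nonneg_right (mul_le_of_le_one_right (by positivity) hA) (by positivity)
    _ = (p : ℚ) ^ ((h.denom.rootMultiplicity 0 : ℤ) - h.num.rootMultiplicity 0) := by
      rw [zpow_sub₀ (by positivity), zpow_natCast, zpow_natCast, inv_pow, inv_pow, inv_div_inv]
    _ ≤ (p : ℚ) ^ (-r) := zpow_le_zpow_right₀ hp.le (by omega)

namespace RatFunc

variable {K : Type*} [Field K] {x : K}

lemma eval_denom_add_ne_zero {a b : RatFunc K} (ha : a.denom.eval x ≠ 0)
    (hb : b.denom.eval x ≠ 0) : (a + b).denom.eval x ≠ 0 := fun h =>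
  mul_ne_zero ha hb (by simpa using eval_eq_zero_of_dvd_of_eval_eq_zero (denom_add_dvd a b) h)

lemma eval_denom_mul_ne_zero {a b : RatFunc K} (ha : a.denom.eval x ≠ 0)
    (hb : b.denom.eval x ≠ 0) : (a * b).denom.eval x ≠ 0 := fun h =>
  mul_ne_zero ha hb (by simpa using eval_eq_zero_of_dvd_of_eval_eq_zero (denom_mul_dvd a b) h)

lemma eval_sum {ι : Type*} (s : Finset ι) (w : ι → RatFunc K)
    (hw : ∀ i ∈ s, (w i).denom.eval x ≠ 0) :
    (∑ i ∈ s, w i).eval (RingHom.id K) x = ∑ i ∈ s, (w i).eval (RingHom.id K) x := by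
  classical
  induction s using Finset.induction_on with
  | empty => simp
  | insert i s hi ih =>
    have hw' : ∀ j ∈ s, (w j).denom.eval x ≠ 0 := fun j hj => hw j (mem_insert_of_mem hj)
    rw [sum_insert hi, sum_insert hi, eval_add _ _ (hw i (mem_insert_self i s))
      (sum_induction _ (fun h : RatFunc K => h.denom.eval x ≠ 0) (fun _ _ => eval_denom_add_ne_zero)
        (by simp) hw'), ih hw']

lemma eval_mul_algebraMap (w : RatFunc K) (q : K[X]) (hw : w.denom.eval x ≠ 0) :
    (w * algebraMap K[X] (RatFunc K) q).eval (RingHom.id K) x =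
      w.eval (RingHom.id K) x * q.eval x := by
  rw [eval_mul _ _ hw (by simp), eval_algebraMap]
  rfl

end RatFunc

lemma gval_sum_mul_algebraMap {ι : Type*} {p : ℕ} (s : Finset ι) (w : ι → RatFunc ℚ)
    (q : ι → ℚ[X]) (hw : ∀ i ∈ s, (w i).denom.eval (p : ℚ) ≠ 0) :
    gval p (∑ i ∈ s, w i * algebraMap ℚ[X] (RatFunc ℚ) (q i)) =
      ∑ i ∈ s, gval p (w i) * (q i).eval (p : ℚ) :=
  (RatFunc.eval_sum s _ fun i hi => RatFunc.eval_denom_mul_ne_zero (hw i hi) (by simp)).trans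
    (sum_congr rfl fun i hi => RatFunc.eval_mul_algebraMap _ _ (hw i hi))

lemma eventually_padicNorm_sum_gval_mul_eval_le {ι : Type*} (s : Finset ι) (w : ι → RatFunc ℚ)
    (q : ι → ℚ[X]) {r : ℤ}
    (hr : (r : WithTop ℤ) ≤ tval (∑ i ∈ s, w i * algebraMap ℚ[X] (RatFunc ℚ) (q i))) :
    ∀ᶠ p : ℕ in atTop, ∀ [Fact p.Prime],
      padicNorm p (∑ i ∈ s, gval p (w i) * (q i).eval (p : ℚ)) ≤ (p : ℚ) ^ (-r) := by
  have hden := (eventually_all_finset s).mpr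
    fun i _ => eventually_eval_natCast_ne_zero (RatFunc.denom_ne_zero (w i))
  filter_upwards [eventually_padicNorm_gval_le _, hden] with p hbound hden _
  rw [← gval_sum_mul_algebraMap s w q hden]
  exact hbound r hr

section PAdic

variable {p : ℕ} [Fact p.Prime] {ι : Type*} {s : Finset ι} {x : ι → ℚ}

lemma padicNorm_zpow_of_eq_one {q : ℚ} (hq : padicNorm p q = 1) (z : ℤ) :
    padicNorm p (q ^ z) = 1 := by
  change IsAbsoluteValue.abvHom' (padicNorm p) (q ^ z) = 1
  rw [map_zpow₀]
  exact (congrArg (· ^ z) hq).trans (one_zpow z)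

lemma padicNorm_natCast_sub_one : padicNorm p ((p : ℚ) - 1) = 1 := by
  have hp := (Fact.out : p.Prime).one_lt
  rw [← Nat.cast_pred (by omega), padicNorm.nat_eq_one_iff]
  exact Nat.not_dvd_of_pos_of_lt (by omega) (by omega)

lemma padicNorm_natCast_pow_sub_one_sub_one_le {d : ℕ} (hd : ¬ p ∣ d) :
    padicNorm p ((d : ℚ) ^ (p - 1) - 1) ≤ (p : ℚ)⁻¹ := by
  have hcop : IsCoprime (d : ℤ) p := by
    rw [Int.isCoprime_iff_gcd_eq_one, Int.gcd_natCast_natCast]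
    exact Nat.coprime_comm.mp (((Fact.out : p.Prime).coprime_iff_not_dvd).mpr hd)
  have hdvd : ((p ^ 1 : ℕ) : ℤ) ∣ (d : ℤ) ^ (p - 1) - 1 := by
    simpa using Int.prime_dvd_pow_sub_one Fact.out hcop
  simpa using padicNorm.dvd_iff_norm_le.mp hdvd

lemma padicNorm_coeff_C_mul_map_le_one {a : ℚ} (ha : padicNorm p a ≤ 1) (Q : ℤ[X]) (k : ℕ) :
    padicNorm p ((C a * Q.map (Int.castRingHom ℚ)).coeff k) ≤ 1 := by
  rw [coeff_C_mul, coeff_map, padicNorm.mul]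
  exact mul_le_one₀ ha (padicNorm.nonneg _) (padicNorm.of_int _)

lemma padicNorm_sum_mul_eval_le {y : ι → ℚ} {Q : ℚ[X]} {D : ℕ} {t : ℚ} (ht : 0 ≤ t)
    (hQ : ∀ k, padicNorm p (Q.coeff k) ≤ 1) (hQD : Q.natDegree ≤ D)
    (hT : ∀ k ≤ D, padicNorm p (∑ i ∈ s, x i * y i ^ k) ≤ t) :
    padicNorm p (∑ i ∈ s, x i * Q.eval (y i)) ≤ t := by
  have hexp : ∑ i ∈ s, x i * Q.eval (y i) =
      ∑ k ∈ range (D + 1), Q.coeff k * ∑ i ∈ s, x i * y i ^ k := by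
    simp_rw [eval_eq_sum_range' (Nat.lt_succ_of_le hQD), mul_sum]
    rw [sum_comm]
    exact sum_congr rfl fun k _ => sum_congr rfl fun i _ => by ring
  rw [hexp]
  refine padicNorm.sum_le' (fun k hk => ?_) ht
  rw [padicNorm.mul]
  exact (mul_le_of_le_one_left (padicNorm.nonneg _) (hQ k)).trans
    (hT k (Nat.lt_succ_iff.mp (mem_range.mp hk)))

lemma padicNorm_sum_mul_pow_le_of_eq_add_mul {y c : ι → ℚ} {l : ℤ} {u : ℚ}
    (hu : padicNorm p u = 1) (hy : ∀ i ∈ s, y i = l + u * c i) {j : ℕ} {t : ℚ} (ht : 0 ≤ t)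
    (hT : ∀ k ≤ j, padicNorm p (∑ i ∈ s, x i * y i ^ k) ≤ t) :
    padicNorm p (∑ i ∈ s, x i * c i ^ j) ≤ t := by
  have hu0 : u ≠ 0 := by rintro rfl; simp at hu
  have hQ : ∀ i ∈ s, c i ^ j =
      (C (u⁻¹ ^ j) * ((X - C l) ^ j).map (Int.castRingHom ℚ)).eval (y i) := by
    intro i hi
    simp only [hy i hi, Polynomial.map_pow, Polynomial.map_sub, map_X, Polynomial.map_intCast,
      eval_mul, eval_C, eval_pow, eval_sub, eval_X, eval_intCast, eq_intCast, add_sub_cancel_left]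
    rw [mul_pow, ← mul_assoc, ← mul_pow, inv_mul_cancel₀ hu0, one_pow, one_mul]
  rw [sum_congr rfl fun i hi => by rw [hQ i hi]]
  refine padicNorm_sum_mul_eval_le ht (padicNorm_coeff_C_mul_map_le_one ?_ _) ?_ hT
  · rw [IsAbsoluteValue.abv_pow (padicNorm p), IsAbsoluteValue.abv_inv (padicNorm p), hu]
    simp
  · exact (natDegree_C_mul_le _ _).trans (natDegree_map_le.trans (by compute_degree))

lemma padicNorm_sum_mul_choose_le {c : ι → ℕ} {j : ℕ} (hj : j < p) {t : ℚ} (ht : 0 ≤ t)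
    (hT : ∀ k ≤ j, padicNorm p (∑ i ∈ s, x i * (c i : ℚ) ^ k) ≤ t) :
    padicNorm p (∑ i ∈ s, x i * (c i).choose j) ≤ t := by
  have hQ : ∀ i, ((c i).choose j : ℚ) =
      (C ((j.factorial : ℚ)⁻¹) * (descPochhammer ℤ j).map (Int.castRingHom ℚ)).eval (c i : ℚ) := by
    intro i
    rw [eval_C_mul, descPochhammer_map, descPochhammer_eval_eq_descFactorial,
      Nat.descFactorial_eq_factorial_mul_choose, Nat.cast_mul, inv_mul_cancel_left₀]
    exact_mod_cast j.factorial_ne_zero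
  simp_rw [hQ]
  refine padicNorm_sum_mul_eval_le ht (padicNorm_coeff_C_mul_map_le_one ?_ _) ?_ hT
  · rw [IsAbsoluteValue.abv_inv (padicNorm p), (padicNorm.nat_eq_one_iff _).mpr, inv_one]
    rwa [(Fact.out : p.Prime).dvd_factorial, not_le]
  · exact (natDegree_C_mul_le _ _).trans (natDegree_map_le.trans (descPochhammer_natDegree ℤ j).le)

lemma padicNorm_sum_mul_one_add_pow_le {c : ι → ℕ} {z : ℚ} {N : ℤ}
    (hz : padicNorm p z ≤ (p : ℚ)⁻¹)
    (hW : ∀ j : ℕ, padicNorm p (∑ i ∈ s, x i * (c i).choose j) ≤ (p : ℚ) ^ ((j : ℤ) - N)) :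
    padicNorm p (∑ i ∈ s, x i * (1 + z) ^ c i) ≤ (p : ℚ) ^ (-N) := by
  have hexp : ∀ i ∈ s,
      (1 + z) ^ c i = ∑ j ∈ range (s.sup c + 1), ((c i).choose j : ℚ) * z ^ j := by
    intro i hi
    have hdeg : ((1 + X : ℚ[X]) ^ c i).natDegree < s.sup c + 1 :=
      Nat.lt_succ_of_le ((natDegree_pow_le_of_le (c i)
        (show (1 + X : ℚ[X]).natDegree ≤ 1 by compute_degree!)).trans (by simpa using le_sup hi))
    simpa [coeff_one_add_X_pow] using eval_eq_sum_range' hdeg z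
  have hswap : ∑ i ∈ s, x i * (1 + z) ^ c i =
      ∑ j ∈ range (s.sup c + 1), z ^ j * ∑ i ∈ s, x i * (c i).choose j := by
    rw [sum_congr rfl fun i hi => by rw [hexp i hi, mul_sum], sum_comm]
    exact sum_congr rfl fun j _ => by rw [mul_sum]; exact sum_congr rfl fun i _ => by ring
  rw [hswap]
  refine padicNorm.sum_le' (fun j _ => ?_) (by positivity)
  have hp : (0 : ℚ) < p := by exact_mod_cast (Fact.out : p.Prime).pos
  calc padicNorm p (z ^ j * ∑ i ∈ s, x i * (c i).choose j)
      ≤ (p : ℚ)⁻¹ ^ j * (p : ℚ) ^ ((j : ℤ) - N) := by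
        rw [padicNorm.mul, IsAbsoluteValue.abv_pow (padicNorm p)]
        exact mul_le_mul (pow_le_pow_left₀ (padicNorm.nonneg _) hz j) (hW j)
          (padicNorm.nonneg _) (by positivity)
    _ = (p : ℚ) ^ (-N) := by
        rw [inv_pow, ← zpow_natCast, ← zpow_neg, ← zpow_add₀ hp.ne']
        ring_nf

lemma padicNorm_sum_mul_pow_toNat_sub_one_le {y : ι → ℤ} {c : ι → ℕ} {l N : ℤ} {d : ℕ}
    (hd : ¬ p ∣ d) (hy : ∀ i ∈ s, y i = l + (p - 1) * c i) (hy1 : ∀ i ∈ s, 1 ≤ y i)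
    (hmom : ∀ j : ℕ, (j < p ∧ ∀ k ≤ j,
        padicNorm p (∑ i ∈ s, x i * (y i : ℚ) ^ k) ≤ (p : ℚ) ^ ((j : ℤ) - N)) ∨
      ∀ i ∈ s, padicNorm p (x i) ≤ (p : ℚ) ^ ((j : ℤ) - N)) :
    padicNorm p (∑ i ∈ s, x i * (d : ℚ) ^ ((y i).toNat - 1)) ≤ (p : ℚ) ^ (-N) := by
  have hp1 := (Fact.out : p.Prime).one_le
  have hd0 : (d : ℚ) ≠ 0 := by rintro h; simp_all
  have hpow : ∀ i ∈ s, (d : ℚ) ^ ((y i).toNat - 1) =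
      (d : ℚ) ^ (l - 1) * (1 + ((d : ℚ) ^ (p - 1) - 1)) ^ c i := by
    intro i hi
    rw [add_sub_cancel, ← pow_mul, ← zpow_natCast, ← zpow_natCast, ← zpow_add₀ hd0]
    congr 1
    have h1 := hy i hi
    have h2 := hy1 i hi
    push_cast [Nat.cast_sub hp1]
    omega
  rw [sum_congr rfl fun i hi => by rw [hpow i hi, mul_left_comm], ← mul_sum, padicNorm.mul,
    padicNorm_zpow_of_eq_one ((padicNorm.nat_eq_one_iff d).mpr hd), one_mul]
  refine padicNorm_sum_mul_one_add_pow_le (padicNorm_natCast_pow_sub_one_sub_one_le hd) fun j => ?_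
  rcases hmom j with ⟨hjp, hT⟩ | hx
  · refine padicNorm_sum_mul_choose_le hjp (by positivity) fun k hk =>
      padicNorm_sum_mul_pow_le_of_eq_add_mul padicNorm_natCast_sub_one
        (fun i hi => by rw [hy i hi]; push_cast; ring) (by positivity)
        fun m hm => hT m (hm.trans hk)
  · refine padicNorm.sum_le' (fun i hi => ?_) (by positivity)
    rw [padicNorm.mul]
    exact (mul_le_of_le_one_right (padicNorm.nonneg _) (padicNorm.of_nat _)).trans (hx i hi)

end PAdic

lemma finite_setOf_natCast_add_le (M : WithTop ℤ) (N : ℤ) :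
    {j : ℕ | ((j : ℤ) : WithTop ℤ) + M ≤ N}.Finite := by
  induction M with
  | top => simp
  | coe a =>
    refine (Set.finite_Iic (N - a).toNat).subset fun j hj => ?_
    simp only [Set.mem_ofPred_eq, ← WithTop.coe_add, WithTop.coe_le_coe] at hj
    simp only [Set.mem_Iic]
    omega

lemma le_of_not_natCast_add_le {M : WithTop ℤ} {N : ℤ} {j : ℕ}
    (h : ¬ ((j : ℤ) : WithTop ℤ) + M ≤ N) : ((N - j : ℤ) : WithTop ℤ) ≤ M := by
  induction M with
  | top => exact le_top
  | coe a =>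
    rw [← WithTop.coe_add, WithTop.coe_le_coe] at h
    exact WithTop.coe_le_coe.mpr (by omega)

lemma exists_eval_natCast_eq_eval_one_add_mul {q : ℤ[X]} {p : ℕ} (hp : 1 < p)
    (h : q.eval 1 ≤ q.eval (p : ℤ)) : ∃ c : ℕ, q.eval (p : ℤ) = q.eval 1 + (p - 1) * c := by
  obtain ⟨c, hc⟩ := sub_dvd_eval_sub (p : ℤ) 1 q
  have hc0 : 0 ≤ c := (mul_nonneg_iff_of_pos_left (by omega : (0 : ℤ) < p - 1)).mp (by linarith)
  lift c to ℕ using hc0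
  exact ⟨c, by linarith⟩

section Fibers

variable {n N : ℕ} {f : Fin n → ℤ[X]} {g : Fin n → RatFunc ℚ}

lemma eventually_padicNorm_fiber_moment_le
    (hC2 : C2cond N f g) (hC3 : C3cond N f g) (hC4 : C4cond N f g) :
    ∀ᶠ p : ℕ in atTop, ∀ l ∈ univ.image (fun i => (f i).eval 1), Even l →
      ∀ j : ℕ, ((j : ℤ) : WithTop ℤ) + Mval g ≤ (N : ℤ) → ∀ [Fact p.Prime],
        padicNorm p (∑ i ∈ univ.filter (fun i => (f i).eval 1 = l),
          gval p (g i) * (((f i).eval (p : ℤ) : ℤ) : ℚ) ^ j) ≤ (p : ℚ) ^ ((j : ℤ) - N) := by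
  refine (eventually_all_finset _).mpr fun l hl => ?_
  obtain ⟨i₀, -, hi₀⟩ := mem_image.mp hl
  by_cases hev : Even l
  swap
  · exact .of_forall fun _ h => absurd h hev
  simp only [hev, true_implies]
  refine (eventually_all_finite (finite_setOf_natCast_add_le (Mval g) N)).mpr fun j hj => ?_
  rcases le_or_gt l 2 with hl2 | hl4
  · have hT := eventually_padicNorm_sum_gval_mul_eval_le _ g
      (fun i => (f i).map (Int.castRingHom ℚ) ^ j) (r := N - j)
      (by simpa [FQ] using hC2 l hev hl2 ⟨i₀, hi₀⟩ j hj)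
    filter_upwards [hT] with p hT _
    simpa using hT
  have hl4 : 4 ≤ l := by obtain ⟨k, rfl⟩ := hev; omega
  have hU : ∀ᶠ p : ℕ in atTop, ∀ [Fact p.Prime],
      padicNorm p (∑ i ∈ univ.filter (fun i => (f i).eval 1 = l),
        gval p (g i) * ((((f i).eval (p : ℤ) : ℤ) : ℚ) ^ j - (l : ℚ) ^ j)) ≤
        (p : ℚ) ^ ((j : ℤ) - N) := by
    rcases Nat.eq_zero_or_pos j with rfl | hj1
    · exact .of_forall fun p _ => by simp
    have hU := eventually_padicNorm_sum_gval_mul_eval_le _ g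
      (fun i => (f i).map (Int.castRingHom ℚ) ^ j - C ((l : ℚ) ^ j)) (r := N - j)
      (by simpa [FQ, ← RatFunc.algebraMap_C] using hC3 l hev hl4 ⟨i₀, hi₀⟩ j hj1 hj)
    filter_upwards [hU] with p hU _
    simpa using hU
  have hS := eventually_padicNorm_sum_gval_mul_eval_le _ g (fun _ => 1) (r := N)
    (by simpa using hC4 l hev hl4 ⟨i₀, hi₀⟩)
  filter_upwards [hU, hS] with p hU hS _
  have hp : (1 : ℚ) ≤ p := by exact_mod_cast (Fact.out : p.Prime).one_le
  have hsplit : ∑ i ∈ univ.filter (fun i => (f i).eval 1 = l),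
        gval p (g i) * (((f i).eval (p : ℤ) : ℤ) : ℚ) ^ j =
      ∑ i ∈ univ.filter (fun i => (f i).eval 1 = l),
          gval p (g i) * ((((f i).eval (p : ℤ) : ℤ) : ℚ) ^ j - (l : ℚ) ^ j) +
        (l : ℚ) ^ j * ∑ i ∈ univ.filter (fun i => (f i).eval 1 = l), gval p (g i) := by
    rw [mul_sum, ← sum_add_distrib]
    exact sum_congr rfl fun i _ => by ring
  rw [hsplit]
  refine padicNorm.nonarchimedean.trans (max_le hU ?_)
  rw [padicNorm.mul]
  calc padicNorm p ((l : ℚ) ^ j) * padicNorm p (∑ i ∈ univ.filter (fun i => (f i).eval 1 = l),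
        gval p (g i)) ≤ 1 * (p : ℚ) ^ (-(N : ℤ)) :=
        mul_le_mul (by exact_mod_cast padicNorm.of_int (l ^ j)) (by simpa using hS)
          (padicNorm.nonneg _) zero_le_one
    _ ≤ (p : ℚ) ^ ((j : ℤ) - N) := by
        rw [one_mul]
        exact zpow_le_zpow_right₀ hp (by omega)

lemma padicNorm_sum_gval_mul_amstar_le {p : ℕ} [Fact p.Prime] (hp2 : p ≠ 2) (m : ℕ)
    (hgrowth : ∀ i, max 4 ((f i).eval 1) ≤ (f i).eval (p : ℤ))
    (hg : ∀ i, ∀ r : ℤ, (r : WithTop ℤ) ≤ tval (g i) →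
      padicNorm p (gval p (g i)) ≤ (p : ℚ) ^ (-r))
    (hsmall : ∀ j : ℕ, ((j : ℤ) : WithTop ℤ) + Mval g ≤ (N : ℤ) → j < p)
    (hmom : ∀ l ∈ univ.image (fun i => (f i).eval 1), Even l →
      ∀ j : ℕ, ((j : ℤ) : WithTop ℤ) + Mval g ≤ (N : ℤ) →
        padicNorm p (∑ i ∈ univ.filter (fun i => (f i).eval 1 = l),
          gval p (g i) * (((f i).eval (p : ℤ) : ℤ) : ℚ) ^ j) ≤ (p : ℚ) ^ ((j : ℤ) - N)) :
    padicNorm p (∑ i, gval p (g i) * amstar p ((f i).eval (p : ℤ)) m) ≤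
      (p : ℚ) ^ (-(N : ℤ)) := by
  have hp := (Fact.out : p.Prime)
  have hp1 : (1 : ℚ) ≤ p := by exact_mod_cast hp.one_le
  choose c hc using fun i =>
    exists_eval_natCast_eq_eval_one_add_mul hp.one_lt (le_of_max_le_right (hgrowth i))
  have hparity : ∀ i, Even ((f i).eval (p : ℤ)) ↔ Even ((f i).eval 1) := by
    have : Even ((p : ℤ) - 1) := by
      obtain ⟨k, hk⟩ := hp.odd_of_ne_two hp2
      exact ⟨k, by rw [hk]; push_cast; ring⟩
    exact fun i => by rw [hc i, Int.even_add, iff_true_right (this.mul_right _)]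
  rw [← sum_fiberwise_of_maps_to fun i _ => mem_image_of_mem (fun i => (f i).eval 1) (mem_univ i)]
  refine padicNorm.sum_le' (fun l hl => ?_) (by positivity)
  by_cases hev : Even l
  swap
  · rw [sum_eq_zero fun i hi => ?_, padicNorm.zero]
    · positivity
    rw [amstar, if_neg fun h => hev ((mem_filter.mp hi).2 ▸ (hparity i).mp h.2), mul_zero]
  rw [sum_congr rfl fun i hi => by
    rw [amstar, if_pos ⟨le_of_max_le_left (hgrowth i),
      (hparity i).mpr ((mem_filter.mp hi).2 ▸ hev)⟩, sigmaStarQ, mul_sum], sum_comm]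
  refine padicNorm.sum_le' (fun d hd => ?_) (by positivity)
  refine padicNorm_sum_mul_pow_toNat_sub_one_le (c := c) (l := l)
    (by simpa using (mem_filter.mp hd).2) (fun i hi => by rw [hc i, (mem_filter.mp hi).2])
    (fun i _ => by have := hgrowth i; omega) fun j => ?_
  by_cases hj : ((j : ℤ) : WithTop ℤ) + Mval g ≤ (N : ℤ)
  · refine .inl ⟨hsmall j hj, fun k hk => (hmom l hl hev k ?_).trans ?_⟩
    · exact (add_le_add (by exact_mod_cast hk) le_rfl).trans hj
    · exact zpow_le_zpow_right₀ hp1 (by omega)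
  · refine .inr fun i _ => (hg i (N - j) ?_).trans_eq (by rw [neg_sub])
    exact (le_of_not_natCast_add_le hj).trans (inf_le (mem_univ i))

end Fibers

theorem statement6_general (N : ℕ) (n : ℕ) (f : Fin n → Polynomial ℤ)
    (hdeg : ∀ i, 0 < (f i).natDegree) (hlc : ∀ i, 0 < (f i).leadingCoeff)
    (g : Fin n → RatFunc ℚ)
    (hC2 : C2cond N f g) (hC3 : C3cond N f g) (hC4 : C4cond N f g) :
    ∃ P : ℕ, 0 < P ∧ ∀ p : ℕ, p.Prime → P < p →
      ∀ m : ℕ, 1 ≤ m →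
        padicNorm p (∑ i, gval p (g i) * amstar p ((f i).eval (p : ℤ)) m)
          ≤ (p : ℚ) ^ (-(N : ℤ)) := by
  have hgrowth : ∀ᶠ p : ℕ in atTop, ∀ i, max 4 ((f i).eval 1) ≤ (f i).eval (p : ℤ) :=
    eventually_all.mpr fun i =>
      (tendsto_eval_natCast_atTop (hdeg i) (hlc i)).eventually_ge_atTop _
  have hg := eventually_all.mpr fun i => eventually_padicNorm_gval_le (g i)
  have hsmall : ∀ᶠ p : ℕ in atTop, ∀ j : ℕ, ((j : ℤ) : WithTop ℤ) + Mval g ≤ (N : ℤ) → j < p :=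
    (eventually_all_finite (finite_setOf_natCast_add_le _ _)).mpr fun j _ => eventually_gt_atTop j
  obtain ⟨P, hP⟩ := eventually_atTop.mp <| hgrowth.and <| hg.and <| hsmall.and <|
    (eventually_padicNorm_fiber_moment_le hC2 hC3 hC4).and (eventually_ne_atTop 2)
  refine ⟨P + 1, P.succ_pos, fun p hp hPp m _ => ?_⟩
  have := Fact.mk hp
  obtain ⟨hgrowth, hg, hsmall, hmom, hp2⟩ := hP p (by omega)
  exact padicNorm_sum_gval_mul_amstar_le hp2 m hgrowth (fun i => hg i) hsmall
    fun l hl hev j hj => hmom l hl hev j hj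

theorem statement6 (N : ℕ) (hN : 0 < N) (n : ℕ) (f : Fin n → Polynomial ℤ)
    (hdeg : ∀ i, 0 < (f i).natDegree) (hlc : ∀ i, 0 < (f i).leadingCoeff)
    (g : Fin n → RatFunc ℚ)
    (hC2 : C2cond N f g) (hC3 : C3cond N f g) (hC4 : C4cond N f g) :
    ∃ P : ℕ, 0 < P ∧ ∀ p : ℕ, p.Prime → P < p →
      ∀ m : ℕ, 1 ≤ m →
        padicNorm p (∑ i, gval p (g i) * amstar p ((f i).eval (p : ℤ)) m)
          ≤ (p : ℚ) ^ (-(N : ℤ)) :=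
  statement6_general N n f hdeg hlc g hC2 hC3 hC4
end

section
/- Let p be a prime and let N, M be integers with M ≤ N and p ≥ N − M + 4. Let (a_m)_{m≥1} be a sequence in ℚ_p such that v_p(a_m) ≥ (p−2)m/(p−1) − 2 for every m ≥ 1 and v_p(a_m) ≥ m − 1 whenever p ≥ m + 2. Let c_1,…,c_n ∈ ℚ_p with v_p(c_i) ≥ M for every i, and let x_1,…,x_n ∈ ℤ_p. Assume that v_p( ∑_{i=1}^n c_i·x_i^m ) ≥ N − m for every integer m with 0 ≤ m ≤ N − M. Then the series ∑_{m≥1} a_m·( ∑_{i=1}^n c_i·x_i^{m−1} ) converges in ℚ_p and its sum S satisfies v_p(S) ≥ N. -/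
/-!
Write `s m = ∑ i, c i * x i ^ m`; by the ultrametric inequality `v(s m) ≥ M` for every `m`.
Every term `a (m + 1) * s m` has valuation at least `N`: for `m ≤ N - M` use
`v(a (m + 1)) ≥ m` together with `v(s m) ≥ N - m`; for `m = N - M + 1` use `v(a (m + 1)) ≥ m` and
`v(s m) ≥ M`; for larger `m` the slope bound `v(a (m + 1)) ≥ (p - 2)(m + 1)/(p - 1) - 2`
already exceeds `N - M` because `p ≥ N - M + 4`. The same slope bound makes the terms decay
geometrically, so the series converges, and the ultrametric inequality carries the termwise bound
over to its sum.
-/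

lemma Real.rpow_neg_mul_rpow_neg_le {q u v w : ℝ} (hq : 1 ≤ q) (h : w ≤ u + v) :
    q ^ (-u) * q ^ (-v) ≤ q ^ (-w) := by
  rw [← Real.rpow_add (by linarith)]
  exact Real.rpow_le_rpow_of_exponent_le hq (by linarith)

lemma norm_mul_le_rpow_neg {R : Type*} [SeminormedRing R] {a b : R} {q u v w : ℝ}
    (hq : 1 ≤ q) (ha : ‖a‖ ≤ q ^ (-u)) (hb : ‖b‖ ≤ q ^ (-v)) (h : w ≤ u + v) : ‖a * b‖ ≤ q ^ (-w) :=
  calc ‖a * b‖ ≤ ‖a‖ * ‖b‖ := norm_mul_le a b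
    _ ≤ q ^ (-u) * q ^ (-v) :=
      mul_le_mul ha hb (norm_nonneg b) (Real.rpow_nonneg (by linarith) _)
    _ ≤ q ^ (-w) := Real.rpow_neg_mul_rpow_neg_le hq h

lemma Real.summable_rpow_neg_affine {q α : ℝ} (hq : 1 < q) (hα : 0 < α) (β : ℝ) :
    Summable fun m : ℕ => q ^ (-(α * m - β)) := by
  have hq0 : 0 < q := by linarith
  have hgeom : q ^ (-α) < 1 := Real.rpow_lt_one_of_one_lt_of_neg hq (by linarith)
  refine ((summable_geometric_of_lt_one (Real.rpow_nonneg hq0.le _) hgeom).mul_left (q ^ β)).congr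
    fun m => ?_
  rw [← Real.rpow_natCast, ← Real.rpow_mul hq0.le, ← Real.rpow_add hq0]
  ring_nf

-- `(q - 2)(d + 3) - (d + 2)(q - 1) = q - d - 4`
lemma add_two_le_mul_div_of_add_four_le {q d m : ℝ} (hq : 2 ≤ q) (hd : d + 4 ≤ q)
    (hm : d + 2 ≤ m) : d + 2 ≤ (q - 2) * (m + 1) / (q - 1) := by
  rw [le_div_iff₀ (by linarith)]
  nlinarith

lemma norm_sum_mul_pow_le {K ι : Type*} [NormedField K] [IsUltrametricDist K] (s : Finset ι)
    {c x : ι → K} {C : ℝ} (hC : 0 ≤ C) (hc : ∀ i, ‖c i‖ ≤ C) (hx : ∀ i, ‖x i‖ ≤ 1) (m : ℕ) :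
    ‖∑ i ∈ s, c i * x i ^ m‖ ≤ C := by
  refine IsUltrametricDist.norm_sum_le_of_forall_le_of_nonneg hC fun i _ => ?_
  rw [norm_mul, norm_pow]
  exact (mul_le_of_le_one_right (norm_nonneg _) (pow_le_one₀ (norm_nonneg _) (hx i))).trans
    (hc i)

section PowerSums

variable {K ι : Type*} [NormedField K] [IsUltrametricDist K] [Fintype ι] {p : ℕ} {N M : ℤ}
  {a : ℕ → K} {c x : ι → K}

lemma norm_coeff_mul_power_sum_le (hp : 2 ≤ p) (hpNM : N - M + 4 ≤ (p : ℤ))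
    (ha1 : ∀ m : ℕ, 1 ≤ m →
      ‖a m‖ ≤ (p : ℝ) ^ (-((((p : ℝ) - 2) * (m : ℝ) / ((p : ℝ) - 1)) - 2)))
    (ha2 : ∀ m : ℕ, 1 ≤ m → m + 2 ≤ p → ‖a m‖ ≤ (p : ℝ) ^ (-((m : ℝ) - 1)))
    (hc : ∀ i, ‖c i‖ ≤ (p : ℝ) ^ (-(M : ℝ))) (hx : ∀ i, ‖x i‖ ≤ 1)
    (hsum : ∀ m : ℕ, (m : ℤ) ≤ N - M →
      ‖∑ i, c i * x i ^ m‖ ≤ (p : ℝ) ^ (-((N : ℝ) - (m : ℝ))))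
    (m : ℕ) : ‖a (m + 1) * ∑ i, c i * x i ^ m‖ ≤ (p : ℝ) ^ (-(N : ℝ)) := by
  have hp2 : (2 : ℝ) ≤ p := by exact_mod_cast hp
  have hq : (1 : ℝ) ≤ p := by linarith
  have hpNM' : (N : ℝ) - M + 4 ≤ p := by exact_mod_cast hpNM
  have hmoment :=
    norm_sum_mul_pow_le Finset.univ (Real.rpow_nonneg (Nat.cast_nonneg p) _) hc hx m
  by_cases hsmall : (m : ℤ) ≤ N - M + 1
  · have hA : ‖a (m + 1)‖ ≤ (p : ℝ) ^ (-(m : ℝ)) := by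
      convert ha2 (m + 1) (by omega) (by omega) using 3
      push_cast
      ring
    by_cases hmN : (m : ℤ) ≤ N - M
    · exact norm_mul_le_rpow_neg hq hA (hsum m hmN) (by linarith)
    · have hNm : (N : ℝ) ≤ m + M := by exact_mod_cast (by omega : N ≤ m + M)
      exact norm_mul_le_rpow_neg hq hA hmoment hNm
  · have hm : (N : ℝ) - M + 2 ≤ m := by exact_mod_cast (by omega : N - M + 2 ≤ m)
    have hslope := add_two_le_mul_div_of_add_four_le hp2 hpNM' hm
    refine norm_mul_le_rpow_neg hq (ha1 (m + 1) (by omega)) hmoment ?_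
    push_cast
    linarith

lemma summable_coeff_mul_power_sum [CompleteSpace K] (hp : 2 < p)
    (ha1 : ∀ m : ℕ, 1 ≤ m →
      ‖a m‖ ≤ (p : ℝ) ^ (-((((p : ℝ) - 2) * (m : ℝ) / ((p : ℝ) - 1)) - 2)))
    (hc : ∀ i, ‖c i‖ ≤ (p : ℝ) ^ (-(M : ℝ))) (hx : ∀ i, ‖x i‖ ≤ 1) :
    Summable fun m : ℕ => a (m + 1) * ∑ i, c i * x i ^ m := by
  have hp2 : (2 : ℝ) < p := by exact_mod_cast hp
  have hM : 0 ≤ (p : ℝ) ^ (-(M : ℝ)) := Real.rpow_nonneg (Nat.cast_nonneg p) _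
  set α : ℝ := ((p : ℝ) - 2) / ((p : ℝ) - 1) with hα_def
  have hα : 0 < α := div_pos (by linarith) (by linarith)
  have hgeom := Real.summable_rpow_neg_affine (q := p) (by linarith) hα (2 - α)
  refine Summable.of_norm_bounded (hgeom.mul_right ((p : ℝ) ^ (-(M : ℝ)))) fun m => ?_
  rw [norm_mul]
  refine mul_le_mul ?_ (norm_sum_mul_pow_le Finset.univ hM hc hx m) (norm_nonneg _)
    (Real.rpow_nonneg (Nat.cast_nonneg p) _)
  have hexp : ((p : ℝ) - 2) * ((m + 1 : ℕ) : ℝ) / ((p : ℝ) - 1) - 2 = α * m - (2 - α) := by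
    rw [hα_def]
    push_cast
    ring
  simpa only [hexp] using ha1 (m + 1) (by omega)

end PowerSums

theorem statement10 (p : ℕ) [hp : Fact p.Prime] (N M : ℤ) (hMN : M ≤ N)
    (hpNM : N - M + 4 ≤ (p : ℤ)) (a : ℕ → ℚ_[p])
    (ha1 : ∀ m : ℕ, 1 ≤ m →
      ‖a m‖ ≤ (p : ℝ) ^ (-((((p : ℝ) - 2) * (m : ℝ) / ((p : ℝ) - 1)) - 2)))
    (ha2 : ∀ m : ℕ, 1 ≤ m → m + 2 ≤ p → ‖a m‖ ≤ (p : ℝ) ^ (-((m : ℝ) - 1)))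
    (n : ℕ) (c : Fin n → ℚ_[p]) (hc : ∀ i, ‖c i‖ ≤ (p : ℝ) ^ (-(M : ℝ)))
    (x : Fin n → ℚ_[p]) (hx : ∀ i, ‖x i‖ ≤ 1)
    (hsum : ∀ m : ℕ, (m : ℤ) ≤ N - M →
      ‖∑ i, c i * x i ^ m‖ ≤ (p : ℝ) ^ (-((N : ℝ) - (m : ℝ)))) :
    ∃ S : ℚ_[p],
      HasSum (fun m : ℕ => a (m + 1) * ∑ i, c i * x i ^ m) S ∧
      ‖S‖ ≤ (p : ℝ) ^ (-(N : ℝ)) := by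
  have hp4 : 4 ≤ p := by omega
  refine ⟨_, (summable_coeff_mul_power_sum (by omega) ha1 hc hx).hasSum, ?_⟩
  exact IsUltrametricDist.norm_tsum_le_of_forall_le_of_nonneg
    (Real.rpow_nonneg (Nat.cast_nonneg p) _)
    (norm_coeff_mul_power_sum_le (by omega) hpNM ha1 ha2 hc hx hsum)
end

section
/- Let p be a prime and let N, M be integers with M ≤ N and p ≥ N − M + 4. Let l be an integer and let (a_m)_{m≥2} be a sequence in ℚ_p such that v_p(a_m) ≥ (p−2)m/(p−1) − 2 for every m ≥ 2 and v_p(a_m) ≥ m − 1 whenever p ≥ m + 2. Let c_1,…,c_n ∈ ℚ_p with v_p(c_i) ≥ M for every i, and let x_1,…,x_n ∈ ℤ_p. Assume that v_p( ∑_{i=1}^n c_i·(x_i^m − l^m) ) ≥ N − m for every integer m with 1 ≤ m ≤ N − M. Then the series ∑_{m≥2} a_m·( ∑_{i=1}^n c_i·(x_i^{m−1} − l^{m−1}) ) converges in ℚ_p and its sum S satisfies v_p(S) ≥ N. -/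
/-!
Put `T k = ∑ i, c i * (x i ^ k - l ^ k)`, so that the `m`-th term is `a (m + 2) * T (m + 1)`.
By the ultrametric inequality `v (T k) ≥ M` for all `k`, and `hsum` improves this to
`v (T k) ≥ N - k` for `k ≤ N - M`. If `m + 1 ≤ N - M` then `m + 4 ≤ p`, so `v (a (m + 2)) ≥ m + 1`
and the term has valuation at least `N`. Otherwise `v (a (m + 2)) ≥ N - M`: from the bound `m - 1`
while `m + 4 ≤ p`, and from `(p - 2) m / (p - 1) - 2` beyond, because `p ≥ N - M + 4`. The latter
bound also makes the terms decay geometrically (`p ≥ 4`), so the series converges, and its sum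
inherits the bound `v ≥ N` of its terms.
-/

theorem norm_mul_le_rpow_neg_s11 {R : Type*} [SeminormedRing R] {b s t r : ℝ} (hb : 1 ≤ b)
    {u v : R} (hu : ‖u‖ ≤ b ^ (-s)) (hv : ‖v‖ ≤ b ^ (-t)) (hr : r ≤ s + t) :
    ‖u * v‖ ≤ b ^ (-r) :=
  calc ‖u * v‖ ≤ ‖u‖ * ‖v‖ := norm_mul_le u v
    _ ≤ b ^ (-s) * b ^ (-t) := mul_le_mul hu hv (norm_nonneg v) (by positivity)
    _ = b ^ (-(s + t)) := by rw [neg_add, Real.rpow_add (by linarith)]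
    _ ≤ b ^ (-r) := Real.rpow_le_rpow_of_exponent_le hb (by linarith)

theorem summable_of_norm_le_rpow_neg {E : Type*} [SeminormedAddCommGroup E] [CompleteSpace E]
    {b α β : ℝ} (hb : 1 < b) (hα : 0 < α) {f : ℕ → E}
    (hf : ∀ m : ℕ, ‖f m‖ ≤ b ^ (-(α * m + β))) : Summable f := by
  have hb0 : 0 < b := by linarith
  have hratio : b ^ (-α) < 1 := Real.rpow_lt_one_of_one_lt_of_neg hb (neg_neg_of_pos hα)
  refine .of_norm_bounded ((summable_geometric_of_lt_one (by positivity) hratio).mul_left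
    (b ^ (-β))) fun m => (hf m).trans_eq ?_
  rw [← Real.rpow_natCast, ← Real.rpow_mul hb0.le, ← Real.rpow_add hb0]
  ring_nf

section Ultrametric

variable {K : Type*} [NormedDivisionRing K] [IsUltrametricDist K]

theorem norm_pow_sub_pow_le_one {x y : K} (hx : ‖x‖ ≤ 1) (hy : ‖y‖ ≤ 1) (k : ℕ) :
    ‖x ^ k - y ^ k‖ ≤ 1 := by
  rw [sub_eq_add_neg]
  refine (IsUltrametricDist.norm_add_le_max _ _).trans (max_le ?_ ?_)
  · rw [norm_pow]; exact pow_le_one₀ (norm_nonneg x) hx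
  · rw [norm_neg, norm_pow]; exact pow_le_one₀ (norm_nonneg y) hy

theorem norm_sum_mul_pow_sub_pow_le {ι : Type*} (s : Finset ι) {c x : ι → K} {y : K}
    {B : ℝ} (hB : 0 ≤ B) (hc : ∀ i, ‖c i‖ ≤ B) (hx : ∀ i, ‖x i‖ ≤ 1) (hy : ‖y‖ ≤ 1) (k : ℕ) :
    ‖∑ i ∈ s, c i * (x i ^ k - y ^ k)‖ ≤ B := by
  refine IsUltrametricDist.norm_sum_le_of_forall_le_of_nonneg hB fun i _ => ?_
  calc ‖c i * (x i ^ k - y ^ k)‖ ≤ ‖c i‖ * ‖x i ^ k - y ^ k‖ := norm_mul_le _ _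
    _ ≤ B * 1 := mul_le_mul (hc i) (norm_pow_sub_pow_le_one (hx i) hy k) (norm_nonneg _) hB
    _ = B := mul_one B

end Ultrametric

section Coefficients

variable {E : Type*} [SeminormedAddGroup E] {p : ℕ} {a : ℕ → E}

theorem norm_coeff_le_geometric
    (ha1 : ∀ m : ℕ, 2 ≤ m →
      ‖a m‖ ≤ (p : ℝ) ^ (-((((p : ℝ) - 2) * (m : ℝ) / ((p : ℝ) - 1)) - 2)))
    (m : ℕ) :
    ‖a (m + 2)‖ ≤ (p : ℝ) ^
      (-(((p : ℝ) - 2) / ((p : ℝ) - 1) * m + (2 * ((p : ℝ) - 2) / ((p : ℝ) - 1) - 2))) := by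
  convert ha1 (m + 2) (by omega) using 3
  push_cast
  ring

theorem norm_coeff_le_of_add_four_le
    (ha2 : ∀ m : ℕ, 2 ≤ m → m + 2 ≤ p → ‖a m‖ ≤ (p : ℝ) ^ (-((m : ℝ) - 1)))
    {m : ℕ} (hm : m + 4 ≤ p) : ‖a (m + 2)‖ ≤ (p : ℝ) ^ (-((m : ℝ) + 1)) := by
  convert ha2 (m + 2) (by omega) (by omega) using 3
  push_cast
  ring

theorem norm_coeff_le_of_le (hp : 2 ≤ p)
    (ha1 : ∀ m : ℕ, 2 ≤ m →
      ‖a m‖ ≤ (p : ℝ) ^ (-((((p : ℝ) - 2) * (m : ℝ) / ((p : ℝ) - 1)) - 2)))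
    (ha2 : ∀ m : ℕ, 2 ≤ m → m + 2 ≤ p → ‖a m‖ ≤ (p : ℝ) ^ (-((m : ℝ) - 1)))
    {d : ℤ} (hd : d + 4 ≤ p) {m : ℕ} (hm : d ≤ m + 1) :
    ‖a (m + 2)‖ ≤ (p : ℝ) ^ (-(d : ℝ)) := by
  have hp1 : (1 : ℝ) ≤ p := by exact_mod_cast (by omega : 1 ≤ p)
  by_cases hmp : m + 4 ≤ p
  · refine (norm_coeff_le_of_add_four_le ha2 hmp).trans
      (Real.rpow_le_rpow_of_exponent_le hp1 ?_)
    have : (d : ℝ) ≤ m + 1 := by exact_mod_cast hm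
    linarith
  · refine (ha1 (m + 2) (by omega)).trans (Real.rpow_le_rpow_of_exponent_le hp1 ?_)
    have hpR : (2 : ℝ) ≤ p := by exact_mod_cast hp
    have hdR : (d : ℝ) + 4 ≤ p := by exact_mod_cast hd
    have hpm : (p : ℝ) ≤ m + 3 := by exact_mod_cast (by omega : p ≤ m + 3)
    -- `(d + 2) (p - 1) ≤ (p - 2) (p - 1) ≤ (p - 2) (m + 2)`
    have key : (d : ℝ) + 2 ≤ ((p : ℝ) - 2) * ((m + 2 : ℕ) : ℝ) / ((p : ℝ) - 1) := by
      rw [le_div_iff₀ (by linarith)]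
      push_cast
      nlinarith
    linarith

end Coefficients

theorem statement11 (p : ℕ) [hp : Fact p.Prime] (N M : ℤ) (hMN : M ≤ N)
    (hpNM : N - M + 4 ≤ (p : ℤ)) (l : ℤ) (a : ℕ → ℚ_[p])
    (ha1 : ∀ m : ℕ, 2 ≤ m →
      ‖a m‖ ≤ (p : ℝ) ^ (-((((p : ℝ) - 2) * (m : ℝ) / ((p : ℝ) - 1)) - 2)))
    (ha2 : ∀ m : ℕ, 2 ≤ m → m + 2 ≤ p → ‖a m‖ ≤ (p : ℝ) ^ (-((m : ℝ) - 1)))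
    (n : ℕ) (c : Fin n → ℚ_[p]) (hc : ∀ i, ‖c i‖ ≤ (p : ℝ) ^ (-(M : ℝ)))
    (x : Fin n → ℚ_[p]) (hx : ∀ i, ‖x i‖ ≤ 1)
    (hsum : ∀ m : ℕ, 1 ≤ m → (m : ℤ) ≤ N - M →
      ‖∑ i, c i * (x i ^ m - (l : ℚ_[p]) ^ m)‖ ≤ (p : ℝ) ^ (-((N : ℝ) - (m : ℝ)))) :
    ∃ S : ℚ_[p],
      HasSum (fun m : ℕ => a (m + 2) * ∑ i, c i * (x i ^ (m + 1) - (l : ℚ_[p]) ^ (m + 1))) S ∧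
      ‖S‖ ≤ (p : ℝ) ^ (-(N : ℝ)) := by
  have hp4 : 4 ≤ p := by exact_mod_cast (by omega : (4 : ℤ) ≤ p)
  have hp4R : (4 : ℝ) ≤ p := by exact_mod_cast hp4
  have hT (k : ℕ) : ‖∑ i, c i * (x i ^ k - (l : ℚ_[p]) ^ k)‖ ≤ (p : ℝ) ^ (-(M : ℝ)) :=
    norm_sum_mul_pow_sub_pow_le _ (by positivity) hc hx (Padic.norm_int_le_one l) k
  have hterm (m : ℕ) : ‖a (m + 2) * ∑ i, c i * (x i ^ (m + 1) - (l : ℚ_[p]) ^ (m + 1))‖ ≤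
      (p : ℝ) ^ (-(N : ℝ)) := by
    rcases le_or_gt ((m : ℤ) + 1) (N - M) with hm | hm
    · exact norm_mul_le_rpow_neg_s11 (by linarith) (norm_coeff_le_of_add_four_le ha2 (by omega))
        (hsum (m + 1) (by omega) (by push_cast; omega)) (by push_cast; linarith)
    · exact norm_mul_le_rpow_neg_s11 (by linarith)
        (norm_coeff_le_of_le (by omega) ha1 ha2 (d := N - M) hpNM (by omega)) (hT _)
        (by push_cast; linarith)
  have hsummable : Summable fun m : ℕ =>
      a (m + 2) * ∑ i, c i * (x i ^ (m + 1) - (l : ℚ_[p]) ^ (m + 1)) :=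
    summable_of_norm_le_rpow_neg (by linarith) (div_pos (by linarith) (by linarith))
      (α := ((p : ℝ) - 2) / ((p : ℝ) - 1)) (β := 2 * ((p : ℝ) - 2) / ((p : ℝ) - 1) - 2 + M)
      fun m => norm_mul_le_rpow_neg_s11 (by linarith) (norm_coeff_le_geometric ha1 m) (hT _)
        (le_of_eq (by ring))
  exact ⟨_, hsummable.hasSum,
    IsUltrametricDist.norm_tsum_le_of_forall_le_of_nonneg (by positivity) hterm⟩
end
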